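/- arXiv:0704.2274 — 2 statements merged into one kernel-verified Lean document; each statement's English description precedes it below -/
import Mathlib

section
/- Let V : ℝ → ℝ be continuous with compact support such that the Schrödinger operator -d²/dx² + V on ℝ has an L² eigenfunction u with eigenvalue E: -u'' + V u = E u. Let β > 0 be large enough that β² + E - V(x) > 0 for all x. Define ε⁻¹(x₁,x₂) = (β² + E)/(β² + E - V(x₂)) and ψ(x₁,x₂) = e^{iβx₁} u(x₂). Then (1/ε)Δψ + (β² + E)ψ = 0 on ℝ², and ψ(·, x₂) is square-integrable in x₂ for each x₁; i.e., the operator -(1/ε)Δ admits the embedded eigenvalue β² + E with eigenfunction ψ. -/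
open Complex MeasureTheory

/-! Separation of variables: `∂₁²ψ = -β²ψ`, and the eigenvalue equation gives `∂₂²ψ = (V - E)ψ`,
so `Δψ = -(β² + E - V)ψ`; multiplying by `ε⁻¹` turns this into `-(β² + E)ψ`. -/

theorem deriv_ofReal_comp (f : ℝ → ℝ) :
    deriv (fun t : ℝ => (f t : ℂ)) = fun t => ((deriv f t : ℝ) : ℂ) := by
  funext t
  by_cases hf : DifferentiableAt ℝ f t
  · exact hf.hasDerivAt.ofReal_comp.deriv
  · have hf' : ¬DifferentiableAt ℝ (fun t : ℝ => (f t : ℂ)) t := fun h =>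
      hf (by simpa [Function.comp_def] using differentiable_re.differentiableAt.comp t h)
    rw [deriv_zero_of_not_differentiableAt hf, deriv_zero_of_not_differentiableAt hf', ofReal_zero]

theorem deriv_deriv_const_mul_ofReal_comp (c : ℂ) (f : ℝ → ℝ) (t : ℝ) :
    deriv (deriv fun t : ℝ => c * (f t : ℂ)) t = c * ((deriv (deriv f) t : ℝ) : ℂ) := by
  simp only [deriv_const_mul_field', deriv_ofReal_comp]

theorem deriv_cexp_mul_ofReal_mul (k c : ℂ) :
    deriv (fun t : ℝ => cexp (k * t) * c) = fun t : ℝ => cexp (k * t) * (k * c) := by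
  funext t
  have hlin : HasDerivAt (fun t : ℝ => k * (t : ℂ)) k t := by
    simpa using ((hasDerivAt_id t).ofReal_comp).const_mul k
  rw [(hlin.cexp.mul_const c).deriv]
  ring

theorem deriv_deriv_cexp_mul_ofReal_mul (k c : ℂ) (t : ℝ) :
    deriv (deriv fun t : ℝ => cexp (k * t) * c) t = k ^ 2 * (cexp (k * t) * c) := by
  rw [deriv_cexp_mul_ofReal_mul, deriv_cexp_mul_ofReal_mul]
  ring

theorem stmt3_general (V : ℝ → ℝ)
    (u : ℝ → ℝ) (huL2 : MemLp u 2 (volume : Measure ℝ))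
    (E : ℝ) (heig : ∀ x : ℝ, -(deriv (deriv u) x) + V x * u x = E * u x)
    (β : ℝ) (hpos : ∀ x : ℝ, 0 < β ^ 2 + E - V x) :
    (∀ x₁ x₂ : ℝ,
      (((β ^ 2 + E) / (β ^ 2 + E - V x₂) : ℝ) : ℂ) *
        (deriv (deriv (fun t : ℝ => Complex.exp (Complex.I * β * t) * (u x₂ : ℂ))) x₁
          + deriv (deriv (fun t : ℝ => Complex.exp (Complex.I * β * x₁) * (u t : ℂ))) x₂)
        + ((β ^ 2 + E : ℝ) : ℂ) * (Complex.exp (Complex.I * β * x₁) * (u x₂ : ℂ)) = 0)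
    ∧ (∀ x₁ : ℝ,
        MemLp (fun x₂ : ℝ => Complex.exp (Complex.I * β * x₁) * (u x₂ : ℂ)) 2
          (volume : Measure ℝ)) := by
  refine ⟨fun x₁ x₂ => ?_, fun x₁ => huL2.ofReal.const_mul _⟩
  have hu'' : deriv (deriv u) x₂ = (V x₂ - E) * u x₂ := by linarith [heig x₂]
  have hden : ((β ^ 2 + E - V x₂ : ℝ) : ℂ) ≠ 0 := ofReal_ne_zero.mpr (hpos x₂).ne'
  rw [deriv_deriv_cexp_mul_ofReal_mul, deriv_deriv_const_mul_ofReal_comp, hu'', mul_pow, I_sq]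
  push_cast at hden ⊢
  field_simp
  ring

/-- If `-u'' + Vu = Eu` with `u ∈ L²(ℝ)`, `V` continuous with compact
support, and `β > 0` with `β² + E - V(x) > 0` for all `x`, then with
`ε⁻¹(x) = (β²+E)/(β²+E−V(x₂))` and `ψ(x₁,x₂) = e^{iβx₁}u(x₂)` one has
`(1/ε)Δψ + (β²+E)ψ = 0` on `ℝ²`, and `ψ(x₁,·)` is square integrable: `β²+E` is an
embedded eigenvalue of `−(1/ε)Δ` with eigenfunction `ψ`. -/
theorem stmt3 (V : ℝ → ℝ) (hV : Continuous V) (hVsupp : HasCompactSupport V)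
    (u : ℝ → ℝ) (hu : ContDiff ℝ 2 u) (huL2 : MemLp u 2 (volume : Measure ℝ))
    (E : ℝ) (heig : ∀ x : ℝ, -(deriv (deriv u) x) + V x * u x = E * u x)
    (β : ℝ) (hβ : 0 < β) (hpos : ∀ x : ℝ, 0 < β ^ 2 + E - V x) :
    (∀ x₁ x₂ : ℝ,
      (((β ^ 2 + E) / (β ^ 2 + E - V x₂) : ℝ) : ℂ) *
        (deriv (deriv (fun t : ℝ => Complex.exp (Complex.I * β * t) * (u x₂ : ℂ))) x₁
          + deriv (deriv (fun t : ℝ => Complex.exp (Complex.I * β * x₁) * (u t : ℂ))) x₂)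
        + ((β ^ 2 + E : ℝ) : ℂ) * (Complex.exp (Complex.I * β * x₁) * (u x₂ : ℂ)) = 0)
    ∧ (∀ x₁ : ℝ,
        MemLp (fun x₂ : ℝ => Complex.exp (Complex.I * β * x₁) * (u x₂ : ℂ)) 2
          (volume : Measure ℝ)) :=
  stmt3_general V u huL2 E heig β hpos
end

section
/- Let w be a C² function on the strip [0,2π] × (-∞, T] satisfying (−Δ − k²)w = 0 for x₂ < −T₀ (for some T₀ < T), the quasi-periodicity w(2π, x₂) = e^{2πiα} w(0, x₂) and ∂₁w(2π,x₂) = e^{2πiα}∂₁w(0,x₂), and suppose that for x₂ < −T₀, w(x₁,x₂) = Σ_{(m+α)² < k²} a_m e^{i(m+α)x₁ − i x₂ sqrt(k² − (m+α)²)} + r(x), with r decaying like O(e^{−δ|x₂|}) together with its first derivatives. If the boundary flux integral ∫₀^{2π} (w ∂₂w̄ − w̄ ∂₂w) dx₁ at x₂ = −R tends to 0 as R → ∞, then a_m = 0 for every m with (m+α)² < k². -/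
open Complex Finset Filter MeasureTheory intervalIntegral

open scoped Real ComplexConjugate Topology

/-! On a horizontal line `x₂ = y` the propagating part is a trigonometric polynomial in `x₁`
(twisted by `e^{iαx₁}`), so by orthogonality of the modes its flux integral is
`4πi Σ |a_m|² β_m` with `β_m = √(k² − (m+α)²) > 0`, whatever `y` is. The remainder and its
`x₂`-derivative are `O(e^{δy})`, so the flux of `w` differs from this constant by `O(e^{δy})`.
Letting `y = −R → −∞`, the constant is the limit of the flux, hence `0`, and as every `β_m` is
positive all `a_m` vanish. -/

lemma integral_exp_mul_conj_exp (α : ℝ) (m n : ℤ) :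
    ∫ x in (0:ℝ)..2 * π, cexp (I * (((m + α : ℝ) : ℂ) * x)) *
        conj (cexp (I * (((n + α : ℝ) : ℂ) * x)))
      = if m = n then (2 * π : ℂ) else 0 := by
  have hprod : ∀ x : ℝ, cexp (I * (((m + α : ℝ) : ℂ) * x)) *
      conj (cexp (I * (((n + α : ℝ) : ℂ) * x))) = cexp (I * (m - n : ℤ) * x) := by
    intro x
    rw [← exp_conj, ← exp_add]
    congr 1
    simp only [map_mul, conj_I, conj_ofReal]
    push_cast
    ring
  simp_rw [hprod]
  split_ifs with h
  · subst h
    simp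
  · have hc : I * ((m - n : ℤ) : ℂ) ≠ 0 :=
      mul_ne_zero I_ne_zero (by exact_mod_cast sub_ne_zero.2 h)
    have hperiod : cexp (I * (m - n : ℤ) * (2 * π)) = 1 := by
      rw [show I * ((m - n : ℤ) : ℂ) * (2 * π) = (m - n : ℤ) * (2 * π * I) by ring]
      exact exp_int_mul_two_pi_mul_I _
    rw [integral_exp_mul_complex hc, ofReal_mul, ofReal_ofNat, hperiod]
    simp

lemma integral_sum_mul_conj_sum (α : ℝ) (M : Finset ℤ) (b c : ℤ → ℂ) :
    ∫ x in (0:ℝ)..2 * π, (∑ m ∈ M, b m * cexp (I * (((m + α : ℝ) : ℂ) * x))) *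
        conj (∑ n ∈ M, c n * cexp (I * (((n + α : ℝ) : ℂ) * x)))
      = 2 * π * ∑ m ∈ M, b m * conj (c m) := by
  simp only [map_sum, map_mul, Finset.sum_mul_sum]
  rw [integral_finsetSum fun m _ => (by fun_prop : Continuous _).intervalIntegrable _ _,
    Finset.mul_sum]
  refine Finset.sum_congr rfl fun m hm => ?_
  rw [integral_finsetSum fun n _ => (by fun_prop : Continuous _).intervalIntegrable _ _]
  calc _ = ∑ n ∈ M, b m * conj (c n) * (if m = n then (2 * π : ℂ) else 0) := by
        refine Finset.sum_congr rfl fun n _ => ?_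
        rw [← integral_exp_mul_conj_exp α, ← intervalIntegral.integral_const_mul]
        exact integral_congr fun x _ => by ring
    _ = _ := by simp [hm]; ring

noncomputable def fluxDensity (u v : ℂ) : ℂ := u * conj v - conj u * v

noncomputable def modeSum (α : ℝ) (M : Finset ℤ) (a : ℤ → ℂ) (β : ℤ → ℝ) (x y : ℝ) : ℂ :=
  ∑ m ∈ M, a m * cexp (I * ((((m : ℝ) + α : ℝ) : ℂ) * x - (y : ℂ) * (β m : ℝ)))

section modeSum

variable (α : ℝ) (M : Finset ℤ) (a : ℤ → ℂ) (β : ℤ → ℝ)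

lemma modeSum_eq (x y : ℝ) : modeSum α M a β x y
    = ∑ m ∈ M, a m * cexp (-(I * y * β m)) * cexp (I * (((m + α : ℝ) : ℂ) * x)) := by
  refine Finset.sum_congr rfl fun m _ => ?_
  rw [mul_assoc, ← exp_add]
  congr 2
  ring

lemma continuous_modeSum (y : ℝ) : Continuous fun x => modeSum α M a β x y := by
  unfold modeSum
  fun_prop

lemma hasDerivAt_modeSum (x y : ℝ) :
    HasDerivAt (modeSum α M a β x) (modeSum α M (fun m => -(I * β m) * a m) β x y) y := by
  unfold modeSum
  refine HasDerivAt.fun_sum fun m _ => ?_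
  have hphase : HasDerivAt (fun s : ℝ => I * ((((m : ℝ) + α : ℝ) : ℂ) * x - (s : ℂ) * (β m : ℝ)))
      (-(I * β m)) y := by
    simpa using (((hasDerivAt_id y).ofReal_comp.mul_const ((β m : ℝ) : ℂ)).const_sub
      ((((m : ℝ) + α : ℝ) : ℂ) * x)).const_mul I
  exact (hphase.cexp.const_mul (a m)).congr_deriv (by ring)

lemma norm_modeSum_le (x y : ℝ) : ‖modeSum α M a β x y‖ ≤ ∑ m ∈ M, ‖a m‖ := by
  refine (norm_sum_le _ _).trans (Finset.sum_le_sum fun m _ => ?_)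
  simp [norm_exp]

lemma integral_fluxDensity_modeSum (y : ℝ) :
    ∫ x in (0:ℝ)..2 * π,
        fluxDensity (modeSum α M a β x y) (modeSum α M (fun m => -(I * β m) * a m) β x y)
      = 4 * π * I * ((∑ m ∈ M, normSq (a m) * β m : ℝ) : ℂ) := by
  have hint : ∀ b c : ℤ → ℂ, IntervalIntegrable (fun x : ℝ => modeSum α M b β x y *
      conj (modeSum α M c β x y)) volume 0 (2 * π) := fun b c =>
    ((continuous_modeSum α M b β y).mul
      (continuous_conj.comp (continuous_modeSum α M c β y))).intervalIntegrable _ _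
  unfold fluxDensity
  simp_rw [mul_comm (conj (modeSum α M a β _ y))]
  rw [integral_sub (hint _ _) (hint _ _)]
  simp_rw [modeSum_eq, integral_sum_mul_conj_sum]
  rw [← mul_sub, ← Finset.sum_sub_distrib, ofReal_sum, Finset.mul_sum, Finset.mul_sum]
  refine Finset.sum_congr rfl fun m _ => ?_
  have hnormSq : a m * cexp (-(I * y * β m)) * conj (a m * cexp (-(I * y * β m)))
      = normSq (a m) := by
    rw [mul_conj, normSq_mul, normSq_eq_norm_sq (cexp _), norm_exp]
    simp
  rw [mul_assoc (-(I * (β m : ℂ))) (a m), map_mul (starRingEnd ℂ) (-(I * (β m : ℂ))),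
    show conj (-(I * (β m : ℂ))) = I * β m by simp, ofReal_mul]
  linear_combination (4 * π * I * β m) * hnormSq

end modeSum

lemma norm_fluxDensity_sub_le (f g u v : ℂ) :
    ‖fluxDensity f g - fluxDensity u v‖
      ≤ 2 * (‖u‖ * ‖g - v‖ + ‖f - u‖ * ‖v‖ + ‖f - u‖ * ‖g - v‖) := by
  have hsub : fluxDensity f g - fluxDensity u v = (f * conj g - u * conj v)
      - conj (f * conj g - u * conj v) := by
    simp only [fluxDensity, map_sub, map_mul, conj_conj]
    ring
  have hsplit : f * conj g - u * conj v
      = u * conj (g - v) + (f - u) * conj v + (f - u) * conj (g - v) := by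
    simp only [map_sub]
    ring
  have hbound : ‖f * conj g - u * conj v‖
      ≤ ‖u‖ * ‖g - v‖ + ‖f - u‖ * ‖v‖ + ‖f - u‖ * ‖g - v‖ := by
    rw [hsplit]
    refine (norm_add₃_le).trans ?_
    simp only [norm_mul, RCLike.norm_conj, le_refl]
  rw [hsub]
  refine (norm_sub_le _ _).trans ?_
  rw [RCLike.norm_conj]
  linarith

lemma norm_integral_fluxDensity_sub_le {f g u v : ℝ → ℂ} {a b A B ε : ℝ} (hab : a ≤ b)
    (hf : Continuous f) (hg : Continuous g) (hu : Continuous u) (hv : Continuous v)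
    (huA : ∀ x, ‖u x‖ ≤ A) (hvB : ∀ x, ‖v x‖ ≤ B)
    (hfu : ∀ x, ‖f x - u x‖ ≤ ε) (hgv : ∀ x, ‖g x - v x‖ ≤ ε) :
    ‖(∫ x in a..b, fluxDensity (f x) (g x)) - ∫ x in a..b, fluxDensity (u x) (v x)‖
      ≤ 2 * (A * ε + ε * B + ε * ε) * (b - a) := by
  have hint : ∀ {p q : ℝ → ℂ}, Continuous p → Continuous q →
      IntervalIntegrable (fun x => fluxDensity (p x) (q x)) volume a b := fun hp hq =>
    Continuous.intervalIntegrable (by unfold fluxDensity; fun_prop) _ _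
  rw [← integral_sub (hint hf hg) (hint hu hv)]
  refine (intervalIntegral.norm_integral_le_of_norm_le_const fun x _ => ?_).trans_eq
    (by rw [abs_of_nonneg (sub_nonneg.2 hab)])
  have hux := huA x
  have hvx := hvB x
  have hfux := hfu x
  have hgvx := hgv x
  have hA : 0 ≤ A := (norm_nonneg _).trans hux
  have hε : 0 ≤ ε := (norm_nonneg _).trans hfux
  refine (norm_fluxDensity_sub_le _ _ _ _).trans ?_
  gcongr

lemma eq_zero_of_sum_normSq_mul_eq_zero {M : Finset ℤ} {a : ℤ → ℂ} {β : ℤ → ℝ}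
    (hβ : ∀ m ∈ M, 0 < β m) (hsum : ∑ m ∈ M, normSq (a m) * β m = 0) : ∀ m ∈ M, a m = 0 := by
  intro m hm
  have hterm := (Finset.sum_eq_zero_iff_of_nonneg fun n hn =>
    mul_nonneg (normSq_nonneg (a n)) (hβ n hn).le).1 hsum m hm
  exact normSq_eq_zero.1 ((mul_eq_zero.1 hterm).resolve_right (hβ m hm).ne')

section partialDeriv

variable {E : Type*} [NormedAddCommGroup E] [NormedSpace ℝ E] {f : ℝ → ℝ → E}
  {U : Set (ℝ × ℝ)}

lemma differentiableAt_snd_of_contDiffOn (hf : ContDiffOn ℝ 1 (fun p : ℝ × ℝ => f p.1 p.2) U)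
    (hU : IsOpen U) {x y : ℝ} (hxy : (x, y) ∈ U) : DifferentiableAt ℝ (f x) y :=
  ((hf.contDiffAt (hU.mem_nhds hxy)).differentiableAt one_ne_zero).comp y
    (by fun_prop : DifferentiableAt ℝ (fun s : ℝ => (x, s)) y)

lemma continuous_deriv_snd_of_contDiffOn (hf : ContDiffOn ℝ 1 (fun p : ℝ × ℝ => f p.1 p.2) U)
    (hU : IsOpen U) {y : ℝ} (hy : ∀ x, (x, y) ∈ U) : Continuous fun x => deriv (f x) y := by
  have hfderiv : Continuous fun x => fderiv ℝ (fun p : ℝ × ℝ => f p.1 p.2) (x, y) :=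
    (hf.continuousOn_fderiv_of_isOpen hU le_rfl).comp_continuous (by fun_prop) hy
  refine (hfderiv.clm_apply (continuous_const (y := ((0 : ℝ), (1 : ℝ))))).congr fun x => ?_
  have hdiff := (hf.contDiffAt (hU.mem_nhds (hy x))).differentiableAt one_ne_zero
  exact (hdiff.hasFDerivAt.comp_hasDerivAt y ((hasDerivAt_const y x).prodMk
    (hasDerivAt_id y))).deriv.symm

end partialDeriv

lemma tendsto_integral_fluxDensity {α δ C T T₀ : ℝ} {M : Finset ℤ} {a : ℤ → ℂ} {β : ℤ → ℝ}
    {w r : ℝ → ℝ → ℂ} (hδ : 0 < δ)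
    (hw : ContDiffOn ℝ 1 (fun p : ℝ × ℝ => w p.1 p.2) {p | p.2 < T})
    (hexp : ∀ x y, y < -T₀ → w x y = modeSum α M a β x y + r x y)
    (hr : ∀ x y, y < -T₀ →
      ‖r x y‖ ≤ C * Real.exp (δ * y) ∧ ‖deriv (fun s => r x s) y‖ ≤ C * Real.exp (δ * y)) :
    Tendsto (fun R : ℝ => ∫ x in (0:ℝ)..2 * π,
        fluxDensity (w x (-R)) (deriv (fun s => w x s) (-R)))
      atTop (𝓝 (4 * π * I * ((∑ m ∈ M, normSq (a m) * β m : ℝ) : ℂ))) := by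
  set A := ∑ m ∈ M, ‖a m‖
  set B := ∑ m ∈ M, ‖-(I * β m) * a m‖
  have hU : IsOpen {p : ℝ × ℝ | p.2 < T} := isOpen_lt continuous_snd continuous_const
  have hbound : ∀ y, y < -T₀ → y < T →
      ‖(∫ x in (0:ℝ)..2 * π, fluxDensity (w x y) (deriv (fun s => w x s) y))
          - 4 * π * I * ((∑ m ∈ M, normSq (a m) * β m : ℝ) : ℂ)‖
        ≤ 2 * (A * (C * Real.exp (δ * y)) + C * Real.exp (δ * y) * B
          + C * Real.exp (δ * y) * (C * Real.exp (δ * y))) * (2 * π) := by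
    intro y hy₀ hyT
    have hderiv : ∀ x, deriv (fun s => w x s) y - modeSum α M (fun m => -(I * β m) * a m) β x y
        = deriv (fun s => r x s) y := by
      intro x
      have hr_eq : (fun s => r x s) =ᶠ[𝓝 y] fun s => w x s - modeSum α M a β x s := by
        filter_upwards [Iio_mem_nhds hy₀] with s hs
        rw [hexp x s hs]
        ring
      exact (hr_eq.deriv_eq.trans ((differentiableAt_snd_of_contDiffOn hw hU hyT).hasDerivAt.sub
        (hasDerivAt_modeSum α M a β x y)).deriv).symm
    have hremainder : ∀ x, ‖w x y - modeSum α M a β x y‖ ≤ C * Real.exp (δ * y) := fun x => by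
      rw [hexp x y hy₀, add_sub_cancel_left]
      exact (hr x y hy₀).1
    rw [← integral_fluxDensity_modeSum α M a β y]
    simpa only [sub_zero] using norm_integral_fluxDensity_sub_le (f := fun x => w x y)
      (g := fun x => deriv (fun s => w x s) y) Real.two_pi_pos.le
      (hw.continuousOn.comp_continuous (Continuous.prodMk_left y) fun _ => hyT)
      (continuous_deriv_snd_of_contDiffOn hw hU fun _ => hyT)
      (continuous_modeSum α M a β y) (continuous_modeSum α M _ β y)
      (fun x => norm_modeSum_le α M a β x y) (fun x => norm_modeSum_le α M _ β x y)
      hremainder (fun x => hderiv x ▸ (hr x y hy₀).2)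
  have hε : Tendsto (fun R : ℝ => C * Real.exp (δ * -R)) atTop (𝓝 0) := by
    simpa using (Real.tendsto_exp_atBot.comp
      (tendsto_neg_atTop_atBot.const_mul_atBot hδ)).const_mul C
  have hbound_lim := ((((hε.const_mul A).add (hε.mul_const B)).add (hε.mul hε)).const_mul
    2).mul_const (2 * π)
  simp only [mul_zero, zero_mul, add_zero] at hbound_lim
  rw [← tendsto_sub_nhds_zero_iff]
  refine squeeze_zero_norm' ?_ hbound_lim
  filter_upwards [eventually_gt_atTop T₀, eventually_gt_atTop (-T)] with R h₀ hT
  exact hbound (-R) (by linarith) (by linarith)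

theorem stmt4_general (k α T T₀ δ : ℝ)
    (hδ : 0 < δ)
    (M : Finset ℤ) (hM : ∀ m : ℤ, m ∈ M ↔ ((m : ℝ) + α) ^ 2 < k ^ 2)
    (a : ℤ → ℂ) (w r : ℝ → ℝ → ℂ)
    (hsmooth : ContDiffOn ℝ 2 (fun p : ℝ × ℝ => w p.1 p.2) {p : ℝ × ℝ | p.2 < T})
    (hexp : ∀ x₁ x₂ : ℝ, x₂ < -T₀ →
      w x₁ x₂ = (∑ m ∈ M, a m * Complex.exp (Complex.I *
          ((((m : ℝ) + α : ℝ) : ℂ) * x₁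
            - (x₂ : ℂ) * (Real.sqrt (k ^ 2 - ((m : ℝ) + α) ^ 2) : ℝ)))) + r x₁ x₂)
    (hrdecay : ∃ C : ℝ, ∀ x₁ x₂ : ℝ, x₂ < -T₀ →
      ‖r x₁ x₂‖ ≤ C * Real.exp (δ * x₂) ∧
      ‖deriv (fun s : ℝ => r x₁ s) x₂‖ ≤ C * Real.exp (δ * x₂) ∧
      ‖deriv (fun t : ℝ => r t x₂) x₁‖ ≤ C * Real.exp (δ * x₂))
    (hflux : Tendsto (fun R : ℝ =>
        ∫ x₁ in (0:ℝ)..(2 * Real.pi),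
          (w x₁ (-R) * (starRingEnd ℂ) (deriv (fun s : ℝ => w x₁ s) (-R))
            - (starRingEnd ℂ) (w x₁ (-R)) * deriv (fun s : ℝ => w x₁ s) (-R)))
      atTop (nhds 0)) :
    ∀ m ∈ M, a m = 0 := by
  obtain ⟨C, hC⟩ := hrdecay
  set β : ℤ → ℝ := fun m => √(k ^ 2 - ((m : ℝ) + α) ^ 2)
  have hβ : ∀ m ∈ M, 0 < β m := fun m hm => Real.sqrt_pos.2 (sub_pos.2 ((hM m).1 hm))
  have hlim := tendsto_integral_fluxDensity (β := β) hδ (hsmooth.of_le one_le_two) hexp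
    fun x y hy => ⟨(hC x y hy).1, (hC x y hy).2.1⟩
  have hsum := tendsto_nhds_unique hlim hflux
  have h4πI : (4 * π * I : ℂ) ≠ 0 := by simp [Real.pi_ne_zero, I_ne_zero]
  exact eq_zero_of_sum_normSq_mul_eq_zero hβ
    (by exact_mod_cast (mul_eq_zero.1 hsum).resolve_left h4πI)

/-- Let `w` be a C² quasi-periodic solution of `(−Δ−k²)w = 0` in `x₂ < −T₀`
which for `x₂ < −T₀` equals a finite sum of propagating modes
`Σ_{(m+α)²<k²} a_m e^{i(m+α)x₁ − i x₂ √(k²−(m+α)²)}` plus a remainder `r` decaying like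
`O(e^{−δ|x₂|})` together with its `x₂`-derivative.  If the boundary flux
`∫₀^{2π}(w ∂₂w̄ − w̄ ∂₂w) dx₁` at `x₂ = −R` tends to `0` as `R → ∞`, then all
propagating coefficients `a_m` vanish. -/
theorem stmt4 (k α T T₀ δ : ℝ) (hk : 0 < k) (hα : 0 ≤ α ∧ α < 1) (hT : T₀ < T)
    (hδ : 0 < δ)
    (M : Finset ℤ) (hM : ∀ m : ℤ, m ∈ M ↔ ((m : ℝ) + α) ^ 2 < k ^ 2)
    (a : ℤ → ℂ) (w r : ℝ → ℝ → ℂ)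
    (hsmooth : ContDiffOn ℝ 2 (fun p : ℝ × ℝ => w p.1 p.2) {p : ℝ × ℝ | p.2 < T})
    (hqp : ∀ x₂ : ℝ, x₂ ≤ T →
      w (2 * Real.pi) x₂ = Complex.exp (2 * Real.pi * Complex.I * α) * w 0 x₂ ∧
      deriv (fun t : ℝ => w t x₂) (2 * Real.pi)
        = Complex.exp (2 * Real.pi * Complex.I * α) * deriv (fun t : ℝ => w t x₂) 0)
    (hpde : ∀ x₁ x₂ : ℝ, x₂ < -T₀ →
      deriv (deriv (fun t : ℝ => w t x₂)) x₁ + deriv (deriv (fun s : ℝ => w x₁ s)) x₂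
        + (k ^ 2 : ℂ) * w x₁ x₂ = 0)
    (hexp : ∀ x₁ x₂ : ℝ, x₂ < -T₀ →
      w x₁ x₂ = (∑ m ∈ M, a m * Complex.exp (Complex.I *
          ((((m : ℝ) + α : ℝ) : ℂ) * x₁
            - (x₂ : ℂ) * (Real.sqrt (k ^ 2 - ((m : ℝ) + α) ^ 2) : ℝ)))) + r x₁ x₂)
    (hrdecay : ∃ C : ℝ, ∀ x₁ x₂ : ℝ, x₂ < -T₀ →
      ‖r x₁ x₂‖ ≤ C * Real.exp (δ * x₂) ∧
      ‖deriv (fun s : ℝ => r x₁ s) x₂‖ ≤ C * Real.exp (δ * x₂) ∧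
      ‖deriv (fun t : ℝ => r t x₂) x₁‖ ≤ C * Real.exp (δ * x₂))
    (hflux : Tendsto (fun R : ℝ =>
        ∫ x₁ in (0:ℝ)..(2 * Real.pi),
          (w x₁ (-R) * (starRingEnd ℂ) (deriv (fun s : ℝ => w x₁ s) (-R))
            - (starRingEnd ℂ) (w x₁ (-R)) * deriv (fun s : ℝ => w x₁ s) (-R)))
      atTop (nhds 0)) :
    ∀ m ∈ M, a m = 0 :=
  stmt4_general k α T T₀ δ hδ M hM a w r hsmooth hexp hrdecay hflux
end
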